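/- Let N be a unital *-algebra with state P, C a commutative *-subalgebra, A = C' its commutant in N, and V ∈ A with P(V*V) = 1. Define a new state Q on A by Q(X) = P(V*XV). If E_P denotes a conditional expectation onto C with respect to P and E_Q with respect to Q, then for every X ∈ A: E_Q(X) · E_P(V*V) agrees with E_P(V*XV) up to Q-null differences; in particular, whenever E_P(V*V) is invertible in C, E_Q(X) = E_P(V*XV) / E_P(V*V) (noncommutative Kallianpur–Striebel / Bayes formula). -/
import Mathlib


open ComplexOrder

/-- **Noncommutative Kallianpur–Striebel (Bayes) formula.**
Let `C` be a commutative *-subalgebra of `N` with commutant `A = C'`, let `V ∈ A`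
with `P(V*V) = 1`, and define the state `Q(X) = P(V* X V)` on `A`.  If `E_P` and
`E_Q` are conditional expectations onto `C` with respect to `P` and `Q`, then
`E_Q(X)·E_P(V*V)` agrees with `E_P(V* X V)` up to `Q`-null differences; in
particular if `E_P(V*V)` has an inverse `u ∈ C` then `E_Q(X)` agrees with
`E_P(V* X V)·u` up to `Q`-null differences. -/
theorem kallianpur_striebel {N : Type*} [Ring N] [StarRing N] [Algebra ℂ N] [StarModule ℂ N]
    (P : N →ₗ[ℂ] ℂ)
    (hpos : ∀ a : N, 0 ≤ P (star a * a))
    (hnorm : P 1 = 1)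
    (C : StarSubalgebra ℂ N)
    (hcomm : ∀ c ∈ C, ∀ d ∈ C, c * d = d * c)
    (Acomm : Set N)
    (hA : Acomm = {x : N | ∀ c ∈ C, x * c = c * x})
    (V : N) (hV : V ∈ Acomm)
    (hVnorm : P (star V * V) = 1)
    (Q : N → ℂ)
    (hQ : ∀ X, Q X = P (star V * X * V))
    (EP EQ : N → N)
    (hEPmem : ∀ a, EP a ∈ C) (hEQmem : ∀ a, EQ a ∈ C)
    (hEP : ∀ a ∈ Acomm, ∀ c ∈ C, P (EP a * c) = P (a * c))
    (hEQ : ∀ a ∈ Acomm, ∀ c ∈ C, Q (EQ a * c) = Q (a * c)) :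
    ∀ X ∈ Acomm,
      (Q (star (EQ X * EP (star V * V) - EP (star V * X * V)) *
          (EQ X * EP (star V * V) - EP (star V * X * V))) = 0) ∧
      (∀ u ∈ C, EP (star V * V) * u = 1 →
        Q (star (EQ X - EP (star V * X * V) * u) *
            (EQ X - EP (star V * X * V) * u)) = 0) := by
  subst hA
  intro X hX
  -- commutation facts
  have hVc : ∀ c ∈ C, V * c = c * V := hV
  have hXc : ∀ c ∈ C, X * c = c * X := hX
  have hsVc : ∀ c ∈ C, star V * c = c * star V := by
    intro c hc
    have h := hVc (star c) (star_mem hc)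
    calc star V * c = star (star c * V) := by simp
      _ = star (V * star c) := by rw [h]
      _ = c * star V := by simp
  -- memberships in the commutant
  have hVXV : star V * X * V ∈ {x : N | ∀ c ∈ C, x * c = c * x} := by
    intro c hc
    calc star V * X * V * c = star V * X * (c * V) := by rw [mul_assoc, hVc c hc]
      _ = star V * (X * c) * V := by noncomm_ring
      _ = star V * (c * X) * V := by rw [hXc c hc]
      _ = (star V * c) * X * V := by noncomm_ring
      _ = (c * star V) * X * V := by rw [hsVc c hc]
      _ = c * (star V * X * V) := by noncomm_ring
  have hVV : star V * V ∈ {x : N | ∀ c ∈ C, x * c = c * x} := by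
    intro c hc
    calc star V * V * c = star V * (c * V) := by rw [mul_assoc, hVc c hc]
      _ = (star V * c) * V := by noncomm_ring
      _ = (c * star V) * V := by rw [hsVc c hc]
      _ = c * (star V * V) := by noncomm_ring
  set W := EP (star V * V) with hWdef
  set Y := EP (star V * X * V) with hYdef
  have hW : W ∈ C := hEPmem _
  have hY : Y ∈ C := hEPmem _
  have hEQX : EQ X ∈ C := hEQmem X
  have hD : EQ X * W - Y ∈ C := C.sub_mem (C.mul_mem hEQX hW) hY
  -- key lemma: Q (D * c) = 0 for all c ∈ C
  have key : ∀ c ∈ C, Q ((EQ X * W - Y) * c) = 0 := by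
    intro c hc
    have hWc : W * c ∈ C := C.mul_mem hW hc
    have hYc : Y * c ∈ C := C.mul_mem hY hc
    have split : Q ((EQ X * W - Y) * c) = Q (EQ X * (W * c)) - Q (Y * c) := by
      rw [hQ, hQ, hQ, ← map_sub]
      congr 1
      noncomm_ring
    have e1 : Q (EQ X * (W * c)) = Q (X * (W * c)) := hEQ X hX (W * c) hWc
    have e2 : Q (X * (W * c)) = P (Y * (W * c)) := by
      rw [hQ]
      have comm : star V * (X * (W * c)) * V = (star V * X * V) * (W * c) := by
        have h := hVc (W * c) hWc
        calc star V * (X * (W * c)) * V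
            = star V * X * ((W * c) * V) := by noncomm_ring
          _ = star V * X * (V * (W * c)) := by rw [← h]
          _ = (star V * X * V) * (W * c) := by noncomm_ring
      rw [comm, ← hEP (star V * X * V) hVXV (W * c) hWc]
    have e3 : Q (Y * c) = P (W * (Y * c)) := by
      rw [hQ]
      have comm : star V * (Y * c) * V = (star V * V) * (Y * c) := by
        have h := hVc (Y * c) hYc
        calc star V * (Y * c) * V
            = star V * ((Y * c) * V) := by noncomm_ring
          _ = star V * (V * (Y * c)) := by rw [← h]
          _ = (star V * V) * (Y * c) := by noncomm_ring
      rw [comm, ← hEP (star V * V) hVV (Y * c) hYc]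
    have e4 : Y * (W * c) = W * (Y * c) := by
      rw [← mul_assoc, ← mul_assoc, hcomm Y hY W hW]
    rw [split, e1, e2, e3, e4, sub_self]
  constructor
  · have hD' : star (EQ X * W - Y) ∈ C := star_mem hD
    have := key (star (EQ X * W - Y)) hD'
    rw [hcomm _ hD' _ hD]; exact this
  · intro u hu huW
    have hDu : EQ X - Y * u = (EQ X * W - Y) * u := by
      rw [sub_mul, mul_assoc, huW, mul_one]
    have hD2 : EQ X - Y * u ∈ C := C.sub_mem hEQX (C.mul_mem hY hu)
    have hsD2 : star (EQ X - Y * u) ∈ C := star_mem hD2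
    have hcomm2 : star (EQ X - Y * u) * (EQ X - Y * u)
        = (EQ X * W - Y) * (u * star (EQ X - Y * u)) := by
      rw [hcomm _ hsD2 _ hD2]
      nth_rewrite 1 [hDu]
      rw [mul_assoc]
    rw [hcomm2]
    exact key _ (C.mul_mem hu hsD2)
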